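/- arXiv:2103.07446 — 5 statements merged into one kernel-verified Lean document; each statement's English description precedes it below -/
import Mathlib

section
/- Let p : ℝ → ℝ be strictly convex, differentiable, and strictly increasing, and fix x^{ND} ∈ ℝ and y^{ND} > 0. Then the function ȳ(x) = y^{ND}·p'(x^{ND})·(x^{ND} − x)/(p(x^{ND}) − p(x)), defined for x ≠ x^{ND} and extended by ȳ(x^{ND}) = y^{ND}, is strictly decreasing in x. -/
open Set

/-! The threshold equals `y^{ND} p'(x^{ND}) / s(x)`, where `s(x)` is the slope of the secant of `p`
through `x` and `x^{ND}`, continuously extended by `s(x^{ND}) = p'(x^{ND})`. Strict convexity makes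
`s` strictly increasing, and monotonicity of `p` makes it positive. -/

theorem StrictConvexOn.strictMonoOn_slope_or_deriv {S : Set ℝ} {f : ℝ → ℝ} {a : ℝ}
    (hf : StrictConvexOn ℝ S f) (ha : a ∈ S) (hfa : DifferentiableAt ℝ f a) :
    StrictMonoOn (fun x => if x = a then deriv f a else slope f x a) S := by
  intro x hx y hy hxy
  by_cases hxa : x = a
  · subst hxa
    simpa [hxy.ne', slope_comm f y] using hf.deriv_lt_slope hx hy hxy hfa
  by_cases hya : y = a
  · subst hya
    simpa [hxa] using hf.slope_lt_deriv hx hy hxy hfa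
  simpa [hxa, hya, slope_comm f _ a, slope_def_field] using
    hf.secant_strict_mono ha hx hy hxa hya hxy

/-- With strictly convex demand, the optimal profitability threshold function
`ȳ(x) = y^{ND} p'(x^{ND})(x^{ND} − x)/(p(x^{ND}) − p(x))` (extended by
`ȳ(x^{ND}) = y^{ND}`) is strictly decreasing. -/
theorem threshold_strictAnti_of_convex
    (p : ℝ → ℝ) (hconv : StrictConvexOn ℝ Set.univ p)
    (hdiff : Differentiable ℝ p) (hmono : StrictMono p)
    (xND yND : ℝ) (hy : 0 < yND) :
    StrictAnti (fun x : ℝ =>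
      if x = xND then yND
      else yND * (deriv p xND * (xND - x) / (p xND - p x))) := by
  set s : ℝ → ℝ := fun x => if x = xND then deriv p xND else slope p x xND with hs_def
  have hs : StrictMono s :=
    strictMonoOn_univ.mp (hconv.strictMonoOn_slope_or_deriv (mem_univ xND) (hdiff xND))
  have hs_pos_of_ne {x : ℝ} (hx : x ≠ xND) : 0 < s x := by
    simpa [hs_def, hx] using (hmono.strictMonoOn univ).slope_pos (mem_univ x) (mem_univ xND) hx
  have hs_pos (x : ℝ) : 0 < s x := by
    by_cases hx : x = xND
    · subst hx
      exact (hs_pos_of_ne (by linarith : x - 1 ≠ x)).trans (hs (by linarith))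
    · exact hs_pos_of_ne hx
  have hd : 0 < deriv p xND := by simpa [hs_def] using hs_pos xND
  have hthreshold : (fun x : ℝ => if x = xND then yND
      else yND * (deriv p xND * (xND - x) / (p xND - p x))) = fun x => yND * deriv p xND / s x := by
    funext x
    by_cases hx : x = xND
    · simp [hs_def, hx, hd.ne']
    · have hpx : p xND - p x ≠ 0 := sub_ne_zero.mpr (hmono.injective.ne (Ne.symm hx))
      have hxx : x - xND ≠ 0 := sub_ne_zero.mpr hx
      simp only [hs_def, hx, if_false, slope_def_field]
      field_simp
  rw [hthreshold]
  exact fun a b hab => div_lt_div_of_pos_left (mul_pos hy hd) (hs_pos a) (hs hab)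
end

section
/- Let p : ℝ → ℝ be strictly concave, differentiable, and strictly increasing, and fix x^{ND} ∈ ℝ and y^{ND} > 0. Then the function ȳ(x) = y^{ND}·p'(x^{ND})·(x^{ND} − x)/(p(x^{ND}) − p(x)), defined for x ≠ x^{ND} and extended by ȳ(x^{ND}) = y^{ND}, is strictly increasing in x. -/
open Set

/-!
Writing `d = p'(x^{ND})`, the threshold is `y^{ND} d / s(x)`, where `s = dslope p x^{ND}` is the
slope of the secant from `x^{ND}`, with the tangent slope `d` filling in at `x^{ND}` itself. Strict
concavity makes `s` strictly decreasing, and strict monotonicity makes it positive, so the threshold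
is strictly increasing.
-/

lemma StrictMono.slope_pos {𝕜 : Type*} [Field 𝕜] [LinearOrder 𝕜] [IsStrictOrderedRing 𝕜]
    {f : 𝕜 → 𝕜} (hf : StrictMono f) {a b : 𝕜} (hab : a ≠ b) : 0 < slope f a b := by
  rw [slope_def_field]
  rcases hab.lt_or_gt with h | h
  · exact div_pos (sub_pos.2 (hf h)) (sub_pos.2 h)
  · exact div_pos_of_neg_of_neg (sub_neg.2 (hf h)) (sub_neg.2 h)

lemma StrictConcaveOn.strictAntiOn_dslope {s : Set ℝ} {f : ℝ → ℝ} {a : ℝ}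
    (hf : StrictConcaveOn ℝ s f) (ha : a ∈ s) (hfa : DifferentiableAt ℝ f a) :
    StrictAntiOn (dslope f a) s := by
  intro x hx y hy hxy
  by_cases hxa : x = a
  · subst hxa
    rw [dslope_same, dslope_of_ne f hxy.ne']
    exact hf.slope_lt_deriv hx hy hxy hfa
  by_cases hya : y = a
  · subst hya
    rw [dslope_same, dslope_of_ne f hxa, slope_comm]
    exact hf.deriv_lt_slope hx hy hxy hfa
  rw [dslope_of_ne f hxa, dslope_of_ne f hya, slope_def_field, slope_def_field]
  exact hf.secant_strict_mono ha hx hy hxa hya hxy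

lemma StrictConcaveOn.dslope_pos {f : ℝ → ℝ} {a : ℝ} (hf : StrictConcaveOn ℝ univ f)
    (hmono : StrictMono f) (hfa : DifferentiableAt ℝ f a) (x : ℝ) : 0 < dslope f a x := by
  have hanti := hf.strictAntiOn_dslope (mem_univ a) hfa
  by_cases hxa : x = a
  · subst hxa
    calc 0 < dslope f x (x + 1) := by
          rw [dslope_of_ne f (by linarith)]
          exact hmono.slope_pos (by linarith)
      _ < dslope f x x := hanti (mem_univ _) (mem_univ _) (by linarith)
  · rw [dslope_of_ne f hxa]
    exact hmono.slope_pos (Ne.symm hxa)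

/-- No injectivity of `f` is needed: where `f x = f a`, both sides are `0` since `_ / 0 = 0`. -/
lemma threshold_eq_div_dslope {𝕜 : Type*} [NontriviallyNormedField 𝕜] [DecidableEq 𝕜]
    {f : 𝕜 → 𝕜} {a : 𝕜} (c : 𝕜) (hfa : deriv f a ≠ 0) :
    (fun x : 𝕜 => if x = a then c else c * (deriv f a * (a - x) / (f a - f x)))
      = fun x => c * deriv f a / dslope f a x := by
  funext x
  by_cases hxa : x = a
  · subst hxa
    rw [if_pos rfl, dslope_same, mul_div_assoc, div_self hfa, mul_one]
  · rw [if_neg hxa, dslope_of_ne f hxa, slope_def_field, div_div_eq_mul_div, mul_div_assoc,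
      mul_div_assoc, mul_assoc, ← neg_sub x a, ← neg_sub (f x) (f a), neg_div_neg_eq]

/-- With strictly concave demand, the optimal profitability threshold function
`ȳ(x) = y^{ND} p'(x^{ND})(x^{ND} − x)/(p(x^{ND}) − p(x))` (extended by
`ȳ(x^{ND}) = y^{ND}`) is strictly increasing. -/
theorem threshold_strictMono_of_concave
    (p : ℝ → ℝ) (hconc : StrictConcaveOn ℝ Set.univ p)
    (hdiff : Differentiable ℝ p) (hmono : StrictMono p)
    (xND yND : ℝ) (hy : 0 < yND) :
    StrictMono (fun x : ℝ =>
      if x = xND then yND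
      else yND * (deriv p xND * (xND - x) / (p xND - p x))) := by
  have hslope_pos := hconc.dslope_pos hmono (hdiff xND)
  have hderiv : 0 < deriv p xND := by simpa only [dslope_same] using hslope_pos xND
  rw [threshold_eq_div_dslope yND hderiv.ne']
  intro x y hxy
  exact div_lt_div_of_pos_left (mul_pos hy hderiv) (hslope_pos y)
    (hconc.strictAntiOn_dslope (mem_univ xND) (hdiff xND) (mem_univ x) (mem_univ y) hxy)
end

section
/- Let X, Y be jointly distributed real random variables with Y uniform on [0,1], and with X | Y = y uniform on [0,1] independently of y. Then the unique pair (x̂, ŷ) ∈ (0,1)² satisfying E[X | (X − x̂)(Y − ŷ) < 0] = x̂ and E[Y | (X − x̂)(Y − ŷ) < 0] = ŷ is (x̂, ŷ) = (1/2, 1/2). -/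
open MeasureTheory Set

/-!
The nondisclosure region `{(X - x̂)(Y - ŷ) < 0}` is the disjoint union of the rectangles
`{X < x̂, Y > ŷ}` and `{X > x̂, Y < ŷ}`, so for a product law its mass and its first moments
factor into one-dimensional quantities; for the uniform law these are polynomials in `x̂, ŷ`.
The two fixed-point equations then become `x̂² (1 - ŷ) = (1 - x̂)² ŷ` and
`x̂ (1 - ŷ)² = (1 - x̂) ŷ²`. Multiplying them gives `(x̂ (1 - ŷ))³ = ((1 - x̂) ŷ)³`, hence
`x̂ = ŷ`, and the first equation then forces `x̂ = 1 - x̂`.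
-/

section Product

variable {α β E : Type*} [MeasurableSpace α] [MeasurableSpace β]
  [NormedAddCommGroup E] [NormedSpace ℝ E] {μ : Measure α} {ν : Measure β} [SFinite μ] [SFinite ν]

theorem setIntegral_prod_fun_fst (f : α → E) (s : Set α) (t : Set β) :
    ∫ q in s ×ˢ t, f q.1 ∂μ.prod ν = ν.real t • ∫ x in s, f x ∂μ := by
  rw [← Measure.prod_restrict, integral_fun_fst, measureReal_restrict_apply_univ]

theorem setIntegral_prod_fun_snd (f : β → E) (s : Set α) (t : Set β) :
    ∫ q in s ×ˢ t, f q.2 ∂μ.prod ν = μ.real s • ∫ y in t, f y ∂ν := by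
  rw [← Measure.prod_restrict, integral_fun_snd, measureReal_restrict_apply_univ]

end Product

section Quadrants

theorem setOf_sub_mul_sub_neg_eq (a b : ℝ) :
    {q : ℝ × ℝ | (q.1 - a) * (q.2 - b) < 0} = Iio a ×ˢ Ioi b ∪ Ioi a ×ˢ Iio b := by
  ext ⟨x, y⟩
  simp only [mem_ofPred_eq, mem_union, mem_prod, mem_Iio, mem_Ioi, mul_neg_iff, sub_pos, sub_neg]
  tauto

theorem disjoint_Iio_prod_Ioi_Ioi_prod_Iio (a b : ℝ) :
    Disjoint (Iio a ×ˢ Ioi b) (Ioi a ×ˢ Iio b) :=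
  disjoint_prod.2 (Or.inl (Iio_disjoint_Ioi_of_le le_rfl))

variable {μ ν : Measure ℝ} [IsFiniteMeasure μ] [IsFiniteMeasure ν]

theorem measureReal_prod_setOf_sub_mul_sub_neg (a b : ℝ) :
    (μ.prod ν).real {q : ℝ × ℝ | (q.1 - a) * (q.2 - b) < 0} =
      μ.real (Iio a) * ν.real (Ioi b) + μ.real (Ioi a) * ν.real (Iio b) := by
  rw [setOf_sub_mul_sub_neg_eq, measureReal_union (disjoint_Iio_prod_Ioi_Ioi_prod_Iio a b)
    (measurableSet_Ioi.prod measurableSet_Iio), measureReal_prod_prod, measureReal_prod_prod]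

theorem setIntegral_fst_setOf_sub_mul_sub_neg (hμ : Integrable id μ) (a b : ℝ) :
    ∫ q in {q : ℝ × ℝ | (q.1 - a) * (q.2 - b) < 0}, q.1 ∂μ.prod ν =
      ν.real (Ioi b) * ∫ x in Iio a, x ∂μ + ν.real (Iio b) * ∫ x in Ioi a, x ∂μ := by
  have h : Integrable (fun q : ℝ × ℝ => q.1) (μ.prod ν) := hμ.comp_fst ν
  rw [setOf_sub_mul_sub_neg_eq, setIntegral_union (disjoint_Iio_prod_Ioi_Ioi_prod_Iio a b)
    (measurableSet_Ioi.prod measurableSet_Iio) h.integrableOn h.integrableOn,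
    setIntegral_prod_fun_fst (fun x => x), setIntegral_prod_fun_fst (fun x => x),
    smul_eq_mul, smul_eq_mul]

theorem setIntegral_snd_setOf_sub_mul_sub_neg (hν : Integrable id ν) (a b : ℝ) :
    ∫ q in {q : ℝ × ℝ | (q.1 - a) * (q.2 - b) < 0}, q.2 ∂μ.prod ν =
      μ.real (Iio a) * ∫ y in Ioi b, y ∂ν + μ.real (Ioi a) * ∫ y in Iio b, y ∂ν := by
  have h : Integrable (fun q : ℝ × ℝ => q.2) (μ.prod ν) := hν.comp_snd μ
  rw [setOf_sub_mul_sub_neg_eq, setIntegral_union (disjoint_Iio_prod_Ioi_Ioi_prod_Iio a b)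
    (measurableSet_Ioi.prod measurableSet_Iio) h.integrableOn h.integrableOn,
    setIntegral_prod_fun_snd (fun y => y), setIntegral_prod_fun_snd (fun y => y),
    smul_eq_mul, smul_eq_mul]

end Quadrants

section Uniform

variable {l u a : ℝ}

theorem Iio_inter_Icc_eq_Ico (ha : a ≤ u) : Iio a ∩ Icc l u = Ico l a := by
  ext x
  simp only [mem_inter_iff, mem_Iio, mem_Icc, mem_Ico]
  constructor
  · rintro ⟨hxa, hlx, -⟩
    exact ⟨hlx, hxa⟩
  · rintro ⟨hlx, hxa⟩
    exact ⟨hxa, hlx, (hxa.trans_le ha).le⟩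

theorem Ioi_inter_Icc_eq_Ioc (ha : l ≤ a) : Ioi a ∩ Icc l u = Ioc a u := by
  ext x
  simp only [mem_inter_iff, mem_Ioi, mem_Icc, mem_Ioc]
  constructor
  · rintro ⟨hax, -, hxu⟩
    exact ⟨hax, hxu⟩
  · rintro ⟨hax, hxu⟩
    exact ⟨hax, (ha.trans_lt hax).le, hxu⟩

theorem measureReal_restrict_Icc_Iio (ha : a ∈ Icc l u) :
    (volume.restrict (Icc l u)).real (Iio a) = a - l := by
  rw [measureReal_restrict_apply measurableSet_Iio, Iio_inter_Icc_eq_Ico ha.2,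
    Real.volume_real_Ico_of_le ha.1]

theorem measureReal_restrict_Icc_Ioi (ha : a ∈ Icc l u) :
    (volume.restrict (Icc l u)).real (Ioi a) = u - a := by
  rw [measureReal_restrict_apply measurableSet_Ioi, Ioi_inter_Icc_eq_Ioc ha.1,
    Real.volume_real_Ioc_of_le ha.2]

theorem setIntegral_Iio_id_restrict_Icc (ha : a ∈ Icc l u) :
    ∫ x in Iio a, x ∂volume.restrict (Icc l u) = (a ^ 2 - l ^ 2) / 2 := by
  rw [Measure.restrict_restrict measurableSet_Iio, Iio_inter_Icc_eq_Ico ha.2,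
    integral_Ico_eq_integral_Ioc, ← intervalIntegral.integral_of_le ha.1, integral_id]

theorem setIntegral_Ioi_id_restrict_Icc (ha : a ∈ Icc l u) :
    ∫ x in Ioi a, x ∂volume.restrict (Icc l u) = (u ^ 2 - a ^ 2) / 2 := by
  rw [Measure.restrict_restrict measurableSet_Ioi, Ioi_inter_Icc_eq_Ioc ha.1,
    ← intervalIntegral.integral_of_le ha.2, integral_id]

end Uniform

theorem balance_equations_iff {x y : ℝ} (hx : x ∈ Ioo (0 : ℝ) 1) (hy : y ∈ Ioo (0 : ℝ) 1) :
    x ^ 2 * (1 - y) = (1 - x) ^ 2 * y ∧ x * (1 - y) ^ 2 = (1 - x) * y ^ 2 ↔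
      x = 1 / 2 ∧ y = 1 / 2 := by
  constructor
  · rintro ⟨h₁, h₂⟩
    have hcube : (x * (1 - y)) ^ 3 = ((1 - x) * y) ^ 3 := by
      linear_combination (x * (1 - y) ^ 2) * h₁ + ((1 - x) ^ 2 * y) * h₂
    have hprod : x * (1 - y) = (1 - x) * y := (Odd.pow_inj (by decide)).1 hcube
    obtain rfl : x = y := by linear_combination hprod
    have hfactor : x * (1 - x) * (2 * x - 1) = 0 := by linear_combination h₁
    have hx₀ : x * (1 - x) ≠ 0 := mul_ne_zero hx.1.ne' (sub_ne_zero.2 hx.2.ne')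
    have hhalf : x = 1 / 2 := by
      linear_combination (mul_eq_zero.1 hfactor).resolve_left hx₀ / 2
    exact ⟨hhalf, hhalf⟩
  · rintro ⟨rfl, rfl⟩
    norm_num

/-- Regularity of the uniform example (θ = 1): with `X, Y` i.i.d. uniform on `[0,1]`,
the unique interior pair `(x̂, ŷ)` such that the conditional means of `X` and `Y`
on the nondisclosure region `{(X − x̂)(Y − ŷ) < 0}` equal `x̂` and `ŷ`
is `(1/2, 1/2)`. -/
theorem uniform_example_regular :
    ∀ xh ∈ Set.Ioo (0:ℝ) 1, ∀ yh ∈ Set.Ioo (0:ℝ) 1,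
      (((∫ q in {q : ℝ × ℝ | (q.1 - xh) * (q.2 - yh) < 0}, q.1
            ∂((volume.restrict (Icc (0:ℝ) 1)).prod (volume.restrict (Icc (0:ℝ) 1)))) /
          (((volume.restrict (Icc (0:ℝ) 1)).prod (volume.restrict (Icc (0:ℝ) 1)))
            {q : ℝ × ℝ | (q.1 - xh) * (q.2 - yh) < 0}).toReal = xh) ∧
        ((∫ q in {q : ℝ × ℝ | (q.1 - xh) * (q.2 - yh) < 0}, q.2
            ∂((volume.restrict (Icc (0:ℝ) 1)).prod (volume.restrict (Icc (0:ℝ) 1)))) /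
          (((volume.restrict (Icc (0:ℝ) 1)).prod (volume.restrict (Icc (0:ℝ) 1)))
            {q : ℝ × ℝ | (q.1 - xh) * (q.2 - yh) < 0}).toReal = yh))
      ↔ (xh = 1/2 ∧ yh = 1/2) := by
  intro x hx y hy
  have hIcc : Integrable id (volume.restrict (Icc (0 : ℝ) 1)) := continuous_id.integrableOn_Icc
  have hmass : (x - 0) * (1 - y) + (1 - x) * (y - 0) ≠ 0 := by
    linarith [mul_pos hx.1 (sub_pos.2 hy.2), mul_pos (sub_pos.2 hx.2) hy.1]
  rw [← measureReal_def, measureReal_prod_setOf_sub_mul_sub_neg,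
    setIntegral_fst_setOf_sub_mul_sub_neg hIcc, setIntegral_snd_setOf_sub_mul_sub_neg hIcc,
    measureReal_restrict_Icc_Iio (Ioo_subset_Icc_self hx),
    measureReal_restrict_Icc_Ioi (Ioo_subset_Icc_self hx),
    measureReal_restrict_Icc_Iio (Ioo_subset_Icc_self hy),
    measureReal_restrict_Icc_Ioi (Ioo_subset_Icc_self hy),
    setIntegral_Iio_id_restrict_Icc (Ioo_subset_Icc_self hx),
    setIntegral_Ioi_id_restrict_Icc (Ioo_subset_Icc_self hx),
    setIntegral_Iio_id_restrict_Icc (Ioo_subset_Icc_self hy),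
    setIntegral_Ioi_id_restrict_Icc (Ioo_subset_Icc_self hy),
    div_eq_iff hmass, div_eq_iff hmass, ← balance_equations_iff hx hy]
  constructor <;> rintro ⟨h₁, h₂⟩
  · exact ⟨by linear_combination -2 * h₁, by linear_combination 2 * h₂⟩
  · exact ⟨by linear_combination -h₁ / 2, by linear_combination h₂ / 2⟩
end

section
/- Let X and Y be independent, with X uniform on [(1−θ)/2, (1+θ)/2] for some θ ∈ (0,1] and Y uniform on [0,1]. Then the unique pair (x̂, ŷ) with x̂ interior to the support of X and ŷ ∈ (0,1) satisfying E[X | (X − x̂)(Y − ŷ) < 0] = x̂ and E[Y | (X − x̂)(Y − ŷ) < 0] = ŷ is x̂ = 1/2, ŷ = 1/2. -/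
/-!
The normalising constant of the prior cancels in both conditional means, so one may work with
Lebesgue measure on the rectangle `[a, b] × [c, d]`. There the region `(X - x)(Y - y) < 0` is the
union of the rectangles `[a, x) × (y, d]` and `(x, b] × [c, y)`; writing `u = x - a`, `v = b - x`,
`p = y - c`, `q = d - y`, the two fixed-point equations become `v²p = u²q` and `uq² = vp²`, whose
only positive solution is `u = v`, `p = q`: the centre of the rectangle.
-/

open MeasureTheory Set

lemma setIntegral_div_measureReal_smul {α : Type*} [MeasurableSpace α] (μ : Measure α)
    {k : ENNReal} (hk₀ : k ≠ 0) (hk : k ≠ ⊤) (f : α → ℝ) (s : Set α) :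
    (∫ q in s, f q ∂(k • μ)) / ((k • μ) s).toReal = (∫ q in s, f q ∂μ) / μ.real s := by
  rw [Measure.restrict_smul, integral_smul_measure, Measure.smul_apply, smul_eq_mul,
    smul_eq_mul, ENNReal.toReal_mul, ← measureReal_def,
    mul_div_mul_left _ _ (ENNReal.toReal_ne_zero.mpr ⟨hk₀, hk⟩)]

lemma setOf_mul_sub_neg_inter_Icc_prod_Icc {R : Type*} [Ring R] [LinearOrder R]
    [IsStrictOrderedRing R] {a b c d x y : R} (hx : x ∈ Icc a b) (hy : y ∈ Icc c d) :
    {q : R × R | (q.1 - x) * (q.2 - y) < 0} ∩ Icc a b ×ˢ Icc c d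
      = Ico a x ×ˢ Ioc y d ∪ Ioc x b ×ˢ Ico c y := by
  ext ⟨p, q⟩
  simp only [mem_inter_iff, mem_ofPred_eq, mem_prod, mem_Icc, mem_Ico, mem_Ioc, mem_union,
    mul_neg_iff, sub_pos, sub_neg]
  constructor
  · rintro ⟨⟨hp, hq⟩ | ⟨hp, hq⟩, ⟨hap, hpb⟩, hcq, hqd⟩
    · exact Or.inr ⟨⟨hp, hpb⟩, hcq, hq⟩
    · exact Or.inl ⟨⟨hap, hp⟩, hq, hqd⟩
  · rintro (⟨⟨hap, hp⟩, hq, hqd⟩ | ⟨⟨hp, hpb⟩, hcq, hq⟩)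
    · exact ⟨Or.inr ⟨hp, hq⟩, ⟨hap, hp.le.trans hx.2⟩, hy.1.trans hq.le, hqd⟩
    · exact ⟨Or.inl ⟨hp, hq⟩, ⟨hx.1.trans hp.le, hpb⟩, hcq, hq.le.trans hy.2⟩

lemma setIntegral_fun_fst_prod {α β : Type*} [MeasurableSpace α] [MeasurableSpace β]
    (μ : Measure α) (ν : Measure β) [SFinite μ] [SFinite ν] (f : α → ℝ) (s : Set α) (t : Set β) :
    ∫ z in s ×ˢ t, f z.1 ∂μ.prod ν = (∫ x in s, f x ∂μ) * ν.real t := by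
  simpa using setIntegral_prod_mul (μ := μ) (ν := ν) f (fun _ => (1 : ℝ)) s t

lemma setIntegral_fun_snd_prod {α β : Type*} [MeasurableSpace α] [MeasurableSpace β]
    (μ : Measure α) (ν : Measure β) [SFinite μ] [SFinite ν] (g : β → ℝ) (s : Set α) (t : Set β) :
    ∫ z in s ×ˢ t, g z.2 ∂μ.prod ν = μ.real s * ∫ y in t, g y ∂ν := by
  simpa using setIntegral_prod_mul (μ := μ) (ν := ν) (fun _ => (1 : ℝ)) g s t

lemma integral_Ioc_id {a b : ℝ} (hab : a ≤ b) : ∫ x in Ioc a b, x = (b ^ 2 - a ^ 2) / 2 := by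
  rw [← intervalIntegral.integral_of_le hab, integral_id]

lemma integral_Ico_id {a b : ℝ} (hab : a ≤ b) : ∫ x in Ico a b, x = (b ^ 2 - a ^ 2) / 2 := by
  rw [integral_Ico_eq_integral_Ioc, integral_Ioc_id hab]

lemma disjoint_Ico_prod_Ioc_prod {α β : Type*} [Preorder α] (a x b : α) (s t : Set β) :
    Disjoint (Ico a x ×ˢ s) (Ioc x b ×ˢ t) :=
  Disjoint.set_prod_left (disjoint_left.mpr fun _ hp hp' => lt_asymm hp.2 hp'.1) _ _

section Rectangle

variable {a b c d x y : ℝ} (hx : x ∈ Icc a b) (hy : y ∈ Icc c d)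
include hx hy

lemma measureReal_mul_sub_neg_inter_Icc_prod_Icc :
    (volume.prod volume).real ({q : ℝ × ℝ | (q.1 - x) * (q.2 - y) < 0} ∩ Icc a b ×ˢ Icc c d)
      = (x - a) * (d - y) + (b - x) * (y - c) := by
  rw [setOf_mul_sub_neg_inter_Icc_prod_Icc hx hy,
    measureReal_union (disjoint_Ico_prod_Ioc_prod _ _ _ _ _)
      (measurableSet_Ioc.prod measurableSet_Ico) (by simp [Measure.prod_prod, ENNReal.mul_eq_top])
      (by simp [Measure.prod_prod, ENNReal.mul_eq_top]),
    measureReal_prod_prod, measureReal_prod_prod, Real.volume_real_Ico_of_le hx.1,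
    Real.volume_real_Ioc_of_le hy.2, Real.volume_real_Ioc_of_le hx.2,
    Real.volume_real_Ico_of_le hy.1]

lemma setIntegral_mul_sub_neg_inter_Icc_prod_Icc {g : ℝ × ℝ → ℝ} (hg : Continuous g) :
    ∫ q in {q : ℝ × ℝ | (q.1 - x) * (q.2 - y) < 0} ∩ Icc a b ×ˢ Icc c d, g q ∂volume.prod volume
      = (∫ q in Ico a x ×ˢ Ioc y d, g q ∂volume.prod volume)
        + ∫ q in Ioc x b ×ˢ Ico c y, g q ∂volume.prod volume := by
  have hR : IntegrableOn g (Icc a b ×ˢ Icc c d) (volume.prod volume) :=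
    hg.continuousOn.integrableOn_compact (isCompact_Icc.prod isCompact_Icc)
  rw [setOf_mul_sub_neg_inter_Icc_prod_Icc hx hy]
  refine setIntegral_union (disjoint_Ico_prod_Ioc_prod _ _ _ _ _)
    (measurableSet_Ioc.prod measurableSet_Ico) (hR.mono_set ?_) (hR.mono_set ?_)
  · exact prod_mono (Ico_subset_Icc_self.trans (Icc_subset_Icc_right hx.2))
      (Ioc_subset_Icc_self.trans (Icc_subset_Icc_left hy.1))
  · exact prod_mono (Ioc_subset_Icc_self.trans (Icc_subset_Icc_left hx.1))
      (Ico_subset_Icc_self.trans (Icc_subset_Icc_right hy.2))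

lemma setIntegral_fst_mul_sub_neg_inter_Icc_prod_Icc :
    ∫ q in {q : ℝ × ℝ | (q.1 - x) * (q.2 - y) < 0} ∩ Icc a b ×ˢ Icc c d, q.1 ∂volume.prod volume
      = (x ^ 2 - a ^ 2) / 2 * (d - y) + (b ^ 2 - x ^ 2) / 2 * (y - c) := by
  rw [setIntegral_mul_sub_neg_inter_Icc_prod_Icc hx hy continuous_fst,
    setIntegral_fun_fst_prod _ _ fun t => t, setIntegral_fun_fst_prod _ _ fun t => t,
    integral_Ico_id hx.1, integral_Ioc_id hx.2, Real.volume_real_Ioc_of_le hy.2,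
    Real.volume_real_Ico_of_le hy.1]

lemma setIntegral_snd_mul_sub_neg_inter_Icc_prod_Icc :
    ∫ q in {q : ℝ × ℝ | (q.1 - x) * (q.2 - y) < 0} ∩ Icc a b ×ˢ Icc c d, q.2 ∂volume.prod volume
      = (x - a) * ((d ^ 2 - y ^ 2) / 2) + (b - x) * ((y ^ 2 - c ^ 2) / 2) := by
  rw [setIntegral_mul_sub_neg_inter_Icc_prod_Icc hx hy continuous_snd,
    setIntegral_fun_snd_prod _ _ fun t => t, setIntegral_fun_snd_prod _ _ fun t => t,
    integral_Ico_id hy.1, integral_Ioc_id hy.2, Real.volume_real_Ico_of_le hx.1,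
    Real.volume_real_Ioc_of_le hx.2]

end Rectangle

lemma eq_and_eq_of_sq_mul_eq_of_mul_sq_eq {u v p q : ℝ} (hu : 0 < u) (hv : 0 < v) (hp : 0 < p)
    (hq : 0 < q) (h₁ : v ^ 2 * p = u ^ 2 * q) (h₂ : u * q ^ 2 = v * p ^ 2) :
    u = v ∧ p = q := by
  have hvq : v * q = u * p := by
    have : u * v * p * q * (v * q - u * p) = 0 := by
      linear_combination u * q ^ 2 * h₁ + u ^ 2 * q * h₂
    simpa [hu.ne', hv.ne', hp.ne', hq.ne', sub_eq_zero] using this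
  have hpq : p = q := by
    have : u * (q ^ 3 - p ^ 3) = 0 := by linear_combination q * h₂ + p ^ 2 * hvq
    have hcube : p ^ 3 = q ^ 3 := by simpa [hu.ne', sub_eq_zero, eq_comm] using this
    exact (pow_left_inj₀ hp.le hq.le three_ne_zero).mp hcube
  subst hpq
  exact ⟨(mul_right_cancel₀ hp.ne' hvq).symm, rfl⟩

lemma threshold_fixed_point_iff_eq_midpoint {a b c d x y : ℝ} (hx : x ∈ Ioo a b)
    (hy : y ∈ Ioo c d) :
    ((x ^ 2 - a ^ 2) / 2 * (d - y) + (b ^ 2 - x ^ 2) / 2 * (y - c))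
        / ((x - a) * (d - y) + (b - x) * (y - c)) = x ∧
      ((x - a) * ((d ^ 2 - y ^ 2) / 2) + (b - x) * ((y ^ 2 - c ^ 2) / 2))
        / ((x - a) * (d - y) + (b - x) * (y - c)) = y ↔
    x = (a + b) / 2 ∧ y = (c + d) / 2 := by
  obtain ⟨hax, hxb⟩ := hx
  obtain ⟨hcy, hyd⟩ := hy
  have hD : (x - a) * (d - y) + (b - x) * (y - c) ≠ 0 := by nlinarith
  rw [div_eq_iff hD, div_eq_iff hD]
  constructor
  · rintro ⟨h₁, h₂⟩
    obtain ⟨hu, hp⟩ := eq_and_eq_of_sq_mul_eq_of_mul_sq_eq (sub_pos.2 hax) (sub_pos.2 hxb)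
      (sub_pos.2 hcy) (sub_pos.2 hyd) (by linear_combination 2 * h₁) (by linear_combination 2 * h₂)
    constructor <;> linarith
  · rintro ⟨rfl, rfl⟩
    constructor <;> ring

/-- Regularity of every signal precision θ in the uniform example: with `X` uniform
on `[(1−θ)/2, (1+θ)/2]` and `Y` uniform on `[0,1]`, independent, the unique pair
`(x̂, ŷ)` with `x̂` interior to the support of `X` and `ŷ ∈ (0,1)` solving the
fixed-point conditions is `x̂ = ŷ = 1/2`. -/
theorem uniform_example_regular_theta
    (θ : ℝ) (hθ : θ ∈ Set.Ioc (0:ℝ) 1) :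
    ∀ xh ∈ Set.Ioo ((1 - θ)/2) ((1 + θ)/2), ∀ yh ∈ Set.Ioo (0:ℝ) 1,
      (((∫ q in {q : ℝ × ℝ | (q.1 - xh) * (q.2 - yh) < 0}, q.1
            ∂(((ENNReal.ofReal θ)⁻¹ • volume.restrict (Icc ((1 - θ)/2) ((1 + θ)/2))).prod
              (volume.restrict (Icc (0:ℝ) 1)))) /
          ((((ENNReal.ofReal θ)⁻¹ • volume.restrict (Icc ((1 - θ)/2) ((1 + θ)/2))).prod
              (volume.restrict (Icc (0:ℝ) 1)))
            {q : ℝ × ℝ | (q.1 - xh) * (q.2 - yh) < 0}).toReal = xh) ∧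
        ((∫ q in {q : ℝ × ℝ | (q.1 - xh) * (q.2 - yh) < 0}, q.2
            ∂(((ENNReal.ofReal θ)⁻¹ • volume.restrict (Icc ((1 - θ)/2) ((1 + θ)/2))).prod
              (volume.restrict (Icc (0:ℝ) 1)))) /
          ((((ENNReal.ofReal θ)⁻¹ • volume.restrict (Icc ((1 - θ)/2) ((1 + θ)/2))).prod
              (volume.restrict (Icc (0:ℝ) 1)))
            {q : ℝ × ℝ | (q.1 - xh) * (q.2 - yh) < 0}).toReal = yh))
      ↔ (xh = 1/2 ∧ yh = 1/2) := by
  intro xh hx yh hy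
  have hx' := Ioo_subset_Icc_self hx
  have hy' := Ioo_subset_Icc_self hy
  have hS : MeasurableSet {q : ℝ × ℝ | (q.1 - xh) * (q.2 - yh) < 0} :=
    measurableSet_lt (by fun_prop) measurable_const
  have hk₀ : (ENNReal.ofReal θ)⁻¹ ≠ 0 := ENNReal.inv_ne_zero.mpr ENNReal.ofReal_ne_top
  have hk : (ENNReal.ofReal θ)⁻¹ ≠ ⊤ := ENNReal.inv_ne_top.mpr (ENNReal.ofReal_pos.mpr hθ.1).ne'
  rw [Measure.prod_smul_left, Measure.prod_restrict, setIntegral_div_measureReal_smul _ hk₀ hk,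
    setIntegral_div_measureReal_smul _ hk₀ hk, Measure.restrict_restrict hS,
    measureReal_restrict_apply hS,
    setIntegral_fst_mul_sub_neg_inter_Icc_prod_Icc hx' hy',
    setIntegral_snd_mul_sub_neg_inter_Icc_prod_Icc hx' hy',
    measureReal_mul_sub_neg_inter_Icc_prod_Icc hx' hy',
    threshold_fixed_point_iff_eq_midpoint hx hy, zero_add,
    show ((1 - θ) / 2 + (1 + θ) / 2) / 2 = 1 / 2 by ring]
end

section
/- Let X and Y be jointly distributed integrable real random variables with joint distribution having full support on [xmin, xmax] × [ymin, ymax], where ymin < 0 < ymax, and suppose the map x̂ ↦ E[X | (X − x̂)·Y < 0] is continuous on [xmin, xmax]. Then there exists x̂ ∈ (xmin, xmax) with E[X | (X − x̂)·Y < 0] = x̂. -/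
open MeasureTheory Set

/-!
At `x̂ = xmin` the nondisclosure event `{(X - x̂) Y < 0}` has positive probability (full support
puts mass near `(xmax, ymin)`), and on it `X ≠ xmin`, so `X > xmin` almost surely there and the
conditional mean lies strictly above `xmin`. Symmetrically, near `(xmin, ymax)`, the conditional
mean at `x̂ = xmax` lies strictly below `xmax`. The intermediate value theorem applied to
`x̂ ↦ E[X | (X − x̂) Y < 0] − x̂` gives an interior zero.
-/

namespace MeasureTheory

variable {α : Type*} [MeasurableSpace α] {μ : Measure α}

theorem integral_pos_of_ae_pos {f : α → ℝ} (hfi : Integrable f μ) (hμ : μ ≠ 0)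
    (hpos : ∀ᵐ a ∂μ, 0 < f a) : 0 < ∫ a, f a ∂μ := by
  refine (integral_pos_iff_support_of_nonneg_ae (hpos.mono fun _ ↦ le_of_lt) hfi).2 ?_
  calc 0 < μ univ := Measure.measure_univ_pos.2 hμ
    _ ≤ μ (Function.support f) := measure_mono_ae (hpos.mono fun _ ha _ ↦ ha.ne')

theorem lt_setIntegral_div_measureReal {f : α → ℝ} {s : Set α} {c : ℝ}
    (hfi : IntegrableOn f s μ) (hs : μ s ≠ 0) (hs_top : μ s ≠ ⊤)
    (hlt : ∀ᵐ a ∂μ.restrict s, c < f a) : c < (∫ a in s, f a ∂μ) / μ.real s := by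
  have hc : IntegrableOn (fun _ ↦ c) s μ := integrableOn_const hs_top
  have hpos : 0 < ∫ a in s, (f a - c) ∂μ :=
    integral_pos_of_ae_pos (hfi.sub hc) (Measure.restrict_eq_zero.not.2 hs)
      (hlt.mono fun _ ↦ sub_pos.2)
  rw [integral_sub hfi hc, setIntegral_const, smul_eq_mul] at hpos
  have hs_pos : 0 < μ.real s := ENNReal.toReal_pos hs hs_top
  rw [lt_div_iff₀ hs_pos]
  linarith

theorem setIntegral_div_measureReal_lt {f : α → ℝ} {s : Set α} {c : ℝ}
    (hfi : IntegrableOn f s μ) (hs : μ s ≠ 0) (hs_top : μ s ≠ ⊤)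
    (hlt : ∀ᵐ a ∂μ.restrict s, f a < c) : (∫ a in s, f a ∂μ) / μ.real s < c := by
  have := lt_setIntegral_div_measureReal (f := fun a ↦ -f a) hfi.neg hs hs_top (c := -c)
    (hlt.mono fun _ ↦ neg_lt_neg)
  rwa [integral_neg, neg_div, neg_lt_neg_iff] at this

end MeasureTheory

theorem equilibrium_fixed_point_exists_general
    (Ω : Type*) [MeasurableSpace Ω] (μ : Measure Ω) [IsProbabilityMeasure μ]
    (X Y : Ω → ℝ) (hmX : Measurable X) (hmY : Measurable Y)
    (hX : Integrable X μ)
    (xmin xmax ymin ymax : ℝ) (hx : xmin < xmax)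
    (hymin : ymin < 0) (hymax : 0 < ymax)
    (hrange : ∀ᵐ ω ∂μ, X ω ∈ Set.Icc xmin xmax ∧ Y ω ∈ Set.Icc ymin ymax)
    (hsupp : ∀ s : Set (ℝ × ℝ), IsOpen s →
      (s ∩ (Set.Icc xmin xmax ×ˢ Set.Icc ymin ymax)).Nonempty →
      0 < (μ.map (fun ω => (X ω, Y ω))) s)
    (h : ℝ → ℝ)
    (hdef : ∀ xh : ℝ, h xh =
      (∫ ω in {ω | (X ω - xh) * Y ω < 0}, X ω ∂μ) /
        (μ {ω | (X ω - xh) * Y ω < 0}).toReal)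
    (hcont : ContinuousOn h (Set.Icc xmin xmax)) :
    ∃ xh ∈ Set.Ioo xmin xmax, h xh = xh := by
  have hevent_ne_zero : ∀ c, ∀ p ∈ Icc xmin xmax ×ˢ Icc ymin ymax, (p.1 - c) * p.2 < 0 →
      μ {ω | (X ω - c) * Y ω < 0} ≠ 0 := by
    intro c p hp hpc
    have hopen : IsOpen {q : ℝ × ℝ | (q.1 - c) * q.2 < 0} := by
      apply isOpen_lt _ continuous_const
      fun_prop
    have := hsupp _ hopen ⟨p, hpc, hp⟩
    rw [Measure.map_apply (hmX.prodMk hmY) hopen.measurableSet] at this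
    exact this.ne'
  have hX_ne : ∀ c, ∀ᵐ ω ∂μ.restrict {ω | (X ω - c) * Y ω < 0}, X ω ≠ c := by
    intro c
    have hA : MeasurableSet {ω | (X ω - c) * Y ω < 0} :=
      measurableSet_lt (by fun_prop) measurable_const
    filter_upwards [ae_restrict_mem hA] with ω hω heq
    simp [heq] at hω
  have hlo : xmin < h xmin := by
    rw [hdef, ← measureReal_def]
    refine lt_setIntegral_div_measureReal hX.integrableOn
      (hevent_ne_zero xmin (xmax, ymin) ⟨⟨hx.le, le_rfl⟩, ⟨le_rfl, (hymin.trans hymax).le⟩⟩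
        (mul_neg_of_pos_of_neg (sub_pos.2 hx) hymin)) (measure_ne_top _ _) ?_
    filter_upwards [ae_restrict_of_ae hrange, hX_ne xmin] with ω hω hωne
    exact hω.1.1.lt_of_ne' hωne
  have hhi : h xmax < xmax := by
    rw [hdef, ← measureReal_def]
    refine setIntegral_div_measureReal_lt hX.integrableOn
      (hevent_ne_zero xmax (xmin, ymax) ⟨⟨le_rfl, hx.le⟩, ⟨(hymin.trans hymax).le, le_rfl⟩⟩
        (mul_neg_of_neg_of_pos (sub_neg.2 hx) hymax)) (measure_ne_top _ _) ?_
    filter_upwards [ae_restrict_of_ae hrange, hX_ne xmax] with ω hω hωne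
    exact hω.1.2.lt_of_ne hωne
  obtain ⟨xh, hxh, hfix⟩ := intermediate_value_Ioo' hx.le (hcont.sub continuousOn_id)
    (show (0 : ℝ) ∈ Ioo (h xmax - xmax) (h xmin - xmin) from ⟨by linarith, by linarith⟩)
  exact ⟨xh, hxh, sub_eq_zero.1 hfix⟩

/-- Existence of a partially-informative equilibrium in the no-commitment disclosure
game: if the joint law of `(X, Y)` has full support on a rectangle with `ymin < 0 < ymax`,
and the nondisclosure-posterior map `x̂ ↦ E[X | (X − x̂)Y < 0]` is continuous on
`[xmin, xmax]`, then it has an interior fixed point. -/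
theorem equilibrium_fixed_point_exists
    (Ω : Type*) [MeasurableSpace Ω] (μ : Measure Ω) [IsProbabilityMeasure μ]
    (X Y : Ω → ℝ) (hmX : Measurable X) (hmY : Measurable Y)
    (hX : Integrable X μ) (hY : Integrable Y μ)
    (xmin xmax ymin ymax : ℝ) (hx : xmin < xmax)
    (hymin : ymin < 0) (hymax : 0 < ymax)
    (hrange : ∀ᵐ ω ∂μ, X ω ∈ Set.Icc xmin xmax ∧ Y ω ∈ Set.Icc ymin ymax)
    (hsupp : ∀ s : Set (ℝ × ℝ), IsOpen s →
      (s ∩ (Set.Icc xmin xmax ×ˢ Set.Icc ymin ymax)).Nonempty →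
      0 < (μ.map (fun ω => (X ω, Y ω))) s)
    (h : ℝ → ℝ)
    (hdef : ∀ xh : ℝ, h xh =
      (∫ ω in {ω | (X ω - xh) * Y ω < 0}, X ω ∂μ) /
        (μ {ω | (X ω - xh) * Y ω < 0}).toReal)
    (hcont : ContinuousOn h (Set.Icc xmin xmax)) :
    ∃ xh ∈ Set.Ioo xmin xmax, h xh = xh :=
  equilibrium_fixed_point_exists_general Ω μ X Y hmX hmY hX xmin xmax ymin ymax hx hymin hymax
    hrange hsupp h hdef hcont
end
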